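/- arXiv:1506.02972 — 2 statements merged into one kernel-verified Lean document; each statement's English description precedes it below -/
import Mathlib

section
/- Let Σ = {a,b,c} be a three-letter alphabet and let L_b = {x ∈ {a,b}* : x contains at least one occurrence of b}, regarded as a language over Σ. Then the syntactic monoid Σ*/≈_{L_b} of L_b is isomorphic as a monoid to (A^+(B_1), +). -/
/-- The Brandt semigroup `B_n`: pairs from `Fin n × Fin n` together with a zero `ϑ = none`. -/
abbrev Brandt (n : ℕ) := Option (Fin n × Fin n)

/-- Addition in the Brandt semigroup `B_n`. -/
def bAdd {n : ℕ} : Brandt n → Brandt n → Brandt n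
  | some (i, j), some (k, l) => if j = k then some (i, l) else none
  | _, _ => none

/-- Pointwise addition on self-maps of `B_n`. -/
def padd {n : ℕ} (f g : Brandt n → Brandt n) : Brandt n → Brandt n :=
  fun x => bAdd (f x) (g x)

/-- Composition of self-maps of `B_n`, arguments written on the left: `x (f ∘ g) = (x f) g`. -/
def mcomp {n : ℕ} (f g : Brandt n → Brandt n) : Brandt n → Brandt n :=
  fun x => g (f x)

/-- The constant map `ξ_c`. -/
def xi {n : ℕ} (c : Brandt n) : Brandt n → Brandt n := fun _ => c

/-- `f` is affine: `f = g + h` with `g` an endomorphism of `(B_n,+)` and `h` a constant map. -/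
def IsAffine {n : ℕ} (f : Brandt n → Brandt n) : Prop :=
  ∃ (g : Brandt n → Brandt n) (c : Brandt n),
    (∀ a b, g (bAdd a b) = bAdd (g a) (g b)) ∧ f = padd g (xi c)

/-- Membership in `A⁺(B_n)`: the smallest subset of `M(B_n)` containing all affine maps and
closed under pointwise addition and composition. -/
inductive AP (n : ℕ) : (Brandt n → Brandt n) → Prop
  | base {f} : IsAffine f → AP n f
  | add {f g} : AP n f → AP n g → AP n (padd f g)
  | comp {f g} : AP n f → AP n g → AP n (mcomp f g)

/-- The singleton-support map `⟨(k,l),(p,q)⟩` sending `(k,l)` to `(p,q)` and everything else to `ϑ`. -/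
def sis {n : ℕ} (k l p q : Fin n) : Brandt n → Brandt n :=
  fun x => if x = some (k, l) then some (p, q) else none

/-- The `n`-support map `(p,q;σ)` sending `(i,p)` to `(iσ,q)` and everything else to `ϑ`. -/
def nsp {n : ℕ} (p q : Fin n) (σ : Equiv.Perm (Fin n)) : Brandt n → Brandt n
  | some (i, j) => if j = p then some (σ i, q) else none
  | none => none

/-- Nonempty words over the alphabet `α` (the elements of the free semigroup `α⁺`). -/
def NEWord (α : Type*) := {l : List α // l ≠ []}

/-- Concatenation of nonempty words. -/
def neappend {α : Type*} (x y : NEWord α) : NEWord α :=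
  ⟨x.1 ++ y.1, fun h => x.2 (List.append_eq_nil_iff.mp h).1⟩

/-- The syntactic congruence of `L ⊆ Σ⁺` on the free semigroup of nonempty words:
`x ≈_L y` iff `uxv ∈ L ↔ uyv ∈ L` for all nonempty words `u, v`. -/
def synSemiSetoid {α : Type*} (L : Set (List α)) : Setoid (NEWord α) where
  r x y := ∀ u v : List α, u ≠ [] → v ≠ [] → ((u ++ x.1 ++ v) ∈ L ↔ (u ++ y.1 ++ v) ∈ L)
  iseqv := ⟨fun _ _ _ _ _ => Iff.rfl, fun h u v hu hv => (h u v hu hv).symm,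
    fun h1 h2 u v hu hv => (h1 u v hu hv).trans (h2 u v hu hv)⟩

/-- The syntactic congruence of `L ⊆ Σ*` on the free monoid of all words:
`x ≈_L y` iff `uxv ∈ L ↔ uyv ∈ L` for all words `u, v`. -/
def synMonSetoid {α : Type*} (L : Set (List α)) : Setoid (List α) where
  r x y := ∀ u v : List α, ((u ++ x ++ v) ∈ L ↔ (u ++ y ++ v) ∈ L)
  iseqv := ⟨fun _ _ _ => Iff.rfl, fun h u v => (h u v).symm,
    fun h1 h2 u v => (h1 u v).trans (h2 u v)⟩

/-- The sum `f + f + ⋯ + f` with `k+1` summands (the `(k+1)`-st additive power of `f`). -/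
def addPow {n : ℕ} (f : Brandt n → Brandt n) : ℕ → (Brandt n → Brandt n)
  | 0 => f
  | k + 1 => padd (addPow f k) f

/-- The composite `f ∘ f ∘ ⋯ ∘ f` with `k+1` factors (the `(k+1)`-st compositional power of `f`). -/
def compPow {n : ℕ} (f : Brandt n → Brandt n) : ℕ → (Brandt n → Brandt n)
  | 0 => f
  | k + 1 => mcomp (compPow f k) f

/-- The word map `φ : Σ⁺ → A⁺(B_n)`, `φ(f₁ f₂ ⋯ f_k) = f₁ + f₂ + ⋯ + f_k` (junk value `ξ_ϑ` on `[]`). -/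
def phiW {n : ℕ} : List {f : Brandt n → Brandt n // IsAffine f} → (Brandt n → Brandt n)
  | [] => xi none
  | a :: t => List.foldl (fun acc s => padd acc s.val) a.val t
/-- The language `L_b` over `Σ = {a,b,c}` (encoded as `Fin 3` with `a = 0`, `b = 1`, `c = 2`):
words using only the letters `a, b` and containing at least one `b`. -/
def Lb : Set (List (Fin 3)) := {x | (∀ s ∈ x, s ≠ 2) ∧ (1 : Fin 3) ∈ x}



section AuxLb

abbrev eB : Brandt 1 := some (0, 0)

lemma brandt1_eq (x : Brandt 1) : x = none ∨ x = eB := by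
  rcases x with _ | p
  · exact Or.inl rfl
  · exact Or.inr (congrArg some (Subsingleton.elim p (0, 0)))

lemma bAdd_none_right (a : Brandt 1) : bAdd a none = none := by
  rcases a with _ | ⟨i, j⟩ <;> rfl

lemma bAdd_none_left (a : Brandt 1) : bAdd none a = none := rfl

lemma bAdd_eB_right (a : Brandt 1) : bAdd a eB = a := by
  rcases brandt1_eq a with h | h <;> subst h <;> decide

def Phi (x : List (Fin 3)) : Brandt 1 → Brandt 1 :=
  if (2 : Fin 3) ∈ x then xi none else if (1 : Fin 3) ∈ x then _root_.id else xi eB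

lemma ap_class : ∀ f : Brandt 1 → Brandt 1, AP 1 f →
    (f = xi none ∨ f = _root_.id ∨ f = xi eB) := by
  intro f h
  induction h with
  | base h =>
      obtain ⟨g, c, hg, rfl⟩ := h
      rcases brandt1_eq c with rfl | rfl
      · left
        funext x
        exact bAdd_none_right (g x)
      · have hgeq : padd g (xi eB) = g := by
          funext x
          exact bAdd_eB_right (g x)
        rw [hgeq]
        rcases brandt1_eq (g eB) with hE | hE
        · left
          have hN : g none = none := by
            have := hg eB none
            rw [bAdd_none_right, hE, bAdd_none_left] at this
            exact this
          funext x
          rcases brandt1_eq x with rfl | rfl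
          · exact hN
          · exact hE
        · rcases brandt1_eq (g none) with hN | hN
          · right; left
            funext x
            rcases brandt1_eq x with rfl | rfl
            · exact hN
            · exact hE
          · right; right
            funext x
            rcases brandt1_eq x with rfl | rfl
            · exact hN
            · exact hE
  | add hf hg ihf ihg =>
      rcases ihf with rfl | rfl | rfl <;> rcases ihg with rfl | rfl | rfl <;> decide
  | comp hf hg ihf ihg =>
      rcases ihf with rfl | rfl | rfl <;> rcases ihg with rfl | rfl | rfl <;> decide

lemma ap_Phi (x : List (Fin 3)) : AP 1 (Phi x) := by
  have h1 : AP 1 (xi (none : Brandt 1)) := AP.base ⟨xi none, none, by decide, by decide⟩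
  have h2 : AP 1 (_root_.id : Brandt 1 → Brandt 1) := AP.base ⟨_root_.id, eB, by decide, by decide⟩
  have h3 : AP 1 (xi eB) := AP.base ⟨xi eB, eB, by decide, by decide⟩
  unfold Phi
  split
  · exact h1
  · split
    · exact h2
    · exact h3

lemma noTwo (x : List (Fin 3)) : (∀ s ∈ x, s ≠ 2) ↔ (2 : Fin 3) ∉ x :=
  ⟨fun h hm => h 2 hm rfl, fun h s hs e => h (e ▸ hs)⟩

lemma mem_Lb_append (u x v : List (Fin 3)) :
    (u ++ x ++ v) ∈ Lb ↔
      ((2:Fin 3) ∉ u ∧ (2:Fin 3) ∉ x ∧ (2:Fin 3) ∉ v ∧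
        ((1:Fin 3) ∈ u ∨ (1:Fin 3) ∈ x ∨ (1:Fin 3) ∈ v)) := by
  simp only [Lb, Set.mem_setOf_eq, List.forall_mem_append, List.mem_append, noTwo]
  tauto

lemma rel_of_code (x y : List (Fin 3))
    (h2 : ((2:Fin 3) ∈ x ↔ (2:Fin 3) ∈ y))
    (h1 : (2:Fin 3) ∉ x → ((1:Fin 3) ∈ x ↔ (1:Fin 3) ∈ y)) :
    (synMonSetoid Lb).r x y := by
  intro u v
  rw [mem_Lb_append, mem_Lb_append]
  by_cases hx : (2:Fin 3) ∈ x
  · have hy : (2:Fin 3) ∈ y := h2.mp hx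
    tauto
  · have hy : (2:Fin 3) ∉ y := fun h => hx (h2.mpr h)
    have := h1 hx
    tauto

lemma code_of_rel (x y : List (Fin 3)) (h : (synMonSetoid Lb).r x y) :
    ((2:Fin 3) ∈ x ↔ (2:Fin 3) ∈ y) ∧
      ((2:Fin 3) ∉ x → ((1:Fin 3) ∈ x ↔ (1:Fin 3) ∈ y)) := by
  have hA := h [1] [1]
  have hB := h [0] [0]
  rw [mem_Lb_append, mem_Lb_append] at hA hB
  have n21 : (2:Fin 3) ∉ ([1] : List (Fin 3)) := by decide
  have n20 : (2:Fin 3) ∉ ([0] : List (Fin 3)) := by decide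
  have m11 : (1:Fin 3) ∈ ([1] : List (Fin 3)) := by decide
  have f10 : (1:Fin 3) ∉ ([0] : List (Fin 3)) := by decide
  have hA' : ((2:Fin 3) ∉ x ↔ (2:Fin 3) ∉ y) := by
    constructor
    · intro hx; exact (hA.mp ⟨n21, hx, n21, Or.inl m11⟩).2.1
    · intro hy; exact (hA.mpr ⟨n21, hy, n21, Or.inl m11⟩).2.1
  refine ⟨not_iff_not.mp hA', ?_⟩
  intro hx
  have hy : (2:Fin 3) ∉ y := hA'.mp hx
  constructor
  · intro h1x
    rcases (hB.mp ⟨n20, hx, n20, Or.inr (Or.inl h1x)⟩).2.2.2 with h' | h' | h'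
    · exact absurd h' f10
    · exact h'
    · exact absurd h' f10
  · intro h1y
    rcases (hB.mpr ⟨n20, hy, n20, Or.inr (Or.inl h1y)⟩).2.2.2 with h' | h' | h'
    · exact absurd h' f10
    · exact h'
    · exact absurd h' f10

lemma Phi_eq_of_rel {x y : List (Fin 3)} (h : (synMonSetoid Lb).r x y) :
    Phi x = Phi y := by
  obtain ⟨h2, h1⟩ := code_of_rel x y h
  unfold Phi
  by_cases hx : (2:Fin 3) ∈ x
  · rw [if_pos hx, if_pos (h2.mp hx)]
  · have hy : (2:Fin 3) ∉ y := fun h' => hx (h2.mpr h')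
    rw [if_neg hx, if_neg hy]
    by_cases h1x : (1:Fin 3) ∈ x
    · rw [if_pos h1x, if_pos ((h1 hx).mp h1x)]
    · rw [if_neg h1x, if_neg (fun h' => h1x ((h1 hx).mpr h'))]

lemma Phi_append (x y : List (Fin 3)) : Phi (x ++ y) = padd (Phi x) (Phi y) := by
  unfold Phi
  by_cases h2x : (2:Fin 3) ∈ x <;> by_cases h2y : (2:Fin 3) ∈ y <;>
    by_cases h1x : (1:Fin 3) ∈ x <;> by_cases h1y : (1:Fin 3) ∈ y <;>
    simp only [List.mem_append, h2x, h2y, h1x, h1y, or_true, true_or, or_false,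
      false_or, or_self, if_true, if_false] <;> decide

end AuxLb

/-- The syntactic monoid `Σ*/≈_{L_b}` of `L_b` is isomorphic as a monoid to `(A⁺(B_1), +)`:
there is a bijection from the quotient onto `A⁺(B_1)` carrying concatenation of words to
pointwise addition of maps. -/
theorem syntactic_monoid_Lb :
    ∃ e : Quotient (synMonSetoid Lb) ≃ {f : Brandt 1 → Brandt 1 // AP 1 f},
      ∀ x y : List (Fin 3),
        (e (Quotient.mk (synMonSetoid Lb) (x ++ y))).val
          = padd (e (Quotient.mk (synMonSetoid Lb) x)).val
                 (e (Quotient.mk (synMonSetoid Lb) y)).val := by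
  classical
  refine ⟨⟨Quotient.lift (fun x => (⟨Phi x, ap_Phi x⟩ : {f : Brandt 1 → Brandt 1 // AP 1 f}))
      (fun a b hab => Subtype.ext (Phi_eq_of_rel hab)),
    fun f => if f.val = xi none then Quotient.mk (synMonSetoid Lb) [2]
      else if f.val = _root_.id then Quotient.mk (synMonSetoid Lb) [1]
      else Quotient.mk (synMonSetoid Lb) [],
    ?_, ?_⟩, ?_⟩
  · intro q
    induction q using Quotient.ind with
    | _ x =>
      show (if Phi x = xi none then Quotient.mk (synMonSetoid Lb) [2]
        else if Phi x = _root_.id then Quotient.mk (synMonSetoid Lb) [1]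
        else Quotient.mk (synMonSetoid Lb) []) = Quotient.mk (synMonSetoid Lb) x
      by_cases h2 : (2:Fin 3) ∈ x
      · have hP : Phi x = xi none := by unfold Phi; rw [if_pos h2]
        rw [if_pos hP]
        exact Quotient.sound (rel_of_code [2] x (by simpa using h2) (by simp))
      · by_cases h1 : (1:Fin 3) ∈ x
        · have hP : Phi x = _root_.id := by unfold Phi; rw [if_neg h2, if_pos h1]
          rw [if_neg (by rw [hP]; decide), if_pos hP]
          refine Quotient.sound (rel_of_code [1] x ?_ (fun _ => by simpa using h1))
          constructor
          · intro h; exact absurd h (by decide)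
          · intro h; exact absurd h h2
        · have hP : Phi x = xi eB := by unfold Phi; rw [if_neg h2, if_neg h1]
          rw [if_neg (by rw [hP]; decide), if_neg (by rw [hP]; decide)]
          refine Quotient.sound (rel_of_code [] x ?_ (fun _ => ?_))
          · constructor
            · intro h; exact absurd h (by decide)
            · intro h; exact absurd h h2
          · constructor
            · intro h; exact absurd h (by decide)
            · intro h; exact absurd h h1
  · intro f
    obtain ⟨fv, hf⟩ := f
    rcases ap_class fv hf with rfl | rfl | rfl
    · show Quotient.lift _ _ (if (xi none : Brandt 1 → Brandt 1) = xi none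
        then Quotient.mk (synMonSetoid Lb) [2] else _) = _
      rw [if_pos rfl]
      exact Subtype.ext (by decide : Phi [2] = xi none)
    · show Quotient.lift _ _ (if (_root_.id : Brandt 1 → Brandt 1) = xi none
        then Quotient.mk (synMonSetoid Lb) [2]
        else if (_root_.id : Brandt 1 → Brandt 1) = _root_.id
        then Quotient.mk (synMonSetoid Lb) [1] else _) = _
      rw [if_neg (by decide), if_pos rfl]
      exact Subtype.ext (by decide : Phi [1] = _root_.id)
    · show Quotient.lift _ _ (if (xi eB : Brandt 1 → Brandt 1) = xi none
        then Quotient.mk (synMonSetoid Lb) [2]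
        else if (xi eB : Brandt 1 → Brandt 1) = _root_.id
        then Quotient.mk (synMonSetoid Lb) [1]
        else Quotient.mk (synMonSetoid Lb) []) = _
      rw [if_neg (by decide), if_neg (by decide)]
      exact Subtype.ext (by decide : Phi [] = xi eB)
  · intro x y
    exact Phi_append x y
end

section
/- For every n ≥ 2 there exist a finite alphabet Σ and a language L ⊆ Σ⁺ such that the syntactic semigroup Σ⁺/≈_L is isomorphic as a semigroup to (A^+(B_n), ∘); that is, (A^+(B_n),∘) is a syntactic semigroup. -/
section Aux
variable {n : ℕ}

lemma ap_const (c : Brandt n) : AP n (xi c) := by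
  apply AP.base
  match c with
  | none => exact ⟨xi none, none, fun a b => rfl, rfl⟩
  | some (p, q) =>
    refine ⟨xi (some (p, p)), some (p, q), fun a b => by simp [xi, bAdd], ?_⟩
    funext x
    simp [padd, xi, bAdd]

lemma ap_nsp1 (p q : Fin n) : AP n (padd id (xi (some (p, q)))) :=
  AP.base ⟨id, some (p, q), fun a b => rfl, rfl⟩

lemma ap_sis_diag (i j : Fin n) : AP n (sis i j i j) := by
  have h := AP.add (ap_nsp1 (n := n) j i) (ap_nsp1 (n := n) j j)
  have : padd (padd id (xi (some (j, i)))) (padd id (xi (some (j, j)))) = sis i j i j := by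
    funext x
    match x with
    | none => rfl
    | some (a, b) =>
      by_cases hb : b = j
      · subst hb
        by_cases ha : a = i
        · subst ha; simp [padd, xi, bAdd, sis]
        · simp [padd, xi, bAdd, sis, ha, Ne.symm ha]
      · simp [padd, xi, bAdd, sis, hb]
  rwa [this] at h

lemma sep_pt (a b : Brandt n) (hab : a ≠ b) :
    ∃ v, AP n v ∧ ¬ ((v a = none) ↔ (v b = none)) := by
  rcases a with _ | ⟨i, j⟩
  · rcases b with _ | ⟨k, l⟩
    · exact absurd rfl hab
    · refine ⟨sis k l k l, ap_sis_diag k l, ?_⟩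
      have h1 : sis k l k l (some (k, l)) = some (k, l) := by simp [sis]
      have h2 : sis k l k l none = none := by simp [sis]
      rw [h1, h2]; simp
  · refine ⟨sis i j i j, ap_sis_diag i j, ?_⟩
    have h1 : sis i j i j (some (i, j)) = some (i, j) := by simp [sis]
    have h2 : sis i j i j b = none := by
      show (if b = some (i, j) then some (i, j) else none) = none
      exact if_neg (Ne.symm hab)
    rw [h1, h2]; simp

lemma xi_eq_xi_none {c : Brandt n} : xi c = xi (none : Brandt n) ↔ c = none := by
  constructor
  · intro h; exact congrFun h none
  · rintro rfl; rfl

lemma separate (f g : Brandt n → Brandt n) (hfg : f ≠ g) :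
    ∃ u v : Brandt n → Brandt n, AP n u ∧ AP n v ∧
      ¬ ((mcomp u (mcomp f v) = xi none) ↔ (mcomp u (mcomp g v) = xi none)) := by
  obtain ⟨x₀, hx₀⟩ := Function.ne_iff.mp hfg
  obtain ⟨v, hv, hsep⟩ := sep_pt (f x₀) (g x₀) hx₀
  refine ⟨xi x₀, v, ap_const x₀, hv, ?_⟩
  have e1 : mcomp (xi x₀) (mcomp f v) = xi (v (f x₀)) := rfl
  have e2 : mcomp (xi x₀) (mcomp g v) = xi (v (g x₀)) := rfl
  rw [e1, e2, xi_eq_xi_none, xi_eq_xi_none]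
  exact hsep

def muF {n m : ℕ} (ε : Fin m → {f : Brandt n → Brandt n // AP n f}) :
    List (Fin m) → (Brandt n → Brandt n)
  | [] => id
  | a :: t => mcomp (ε a).val (muF ε t)

lemma muF_append {m : ℕ} (ε : Fin m → {f : Brandt n → Brandt n // AP n f})
    (u v : List (Fin m)) : muF ε (u ++ v) = mcomp (muF ε u) (muF ε v) := by
  induction u with
  | nil => rfl
  | cons a t ih => show mcomp (ε a).val (muF ε (t ++ v)) = _; rw [ih]; rfl

lemma muF_ap {m : ℕ} (ε : Fin m → {f : Brandt n → Brandt n // AP n f})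
    (w : List (Fin m)) (hw : w ≠ []) : AP n (muF ε w) := by
  induction w with
  | nil => exact absurd rfl hw
  | cons a t ih =>
    match t with
    | [] => exact (ε a).2
    | b :: s => exact AP.comp (ε a).2 (ih (by simp))

end Aux

/-- For every `n ≥ 2` there are a finite alphabet `Σ` and a language `L ⊆ Σ⁺` whose syntactic
semigroup `Σ⁺/≈_L` is isomorphic as a semigroup to `(A⁺(B_n), ∘)`: there is a bijection from
the quotient onto `A⁺(B_n)` carrying concatenation of words to composition of maps. -/
theorem AP_comp_is_syntactic (n : ℕ) (hn : 2 ≤ n) :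
    ∃ (m : ℕ) (L : Set (List (Fin m))), ([] : List (Fin m)) ∉ L ∧
      ∃ e : Quotient (synSemiSetoid L) ≃ {f : Brandt n → Brandt n // AP n f},
        ∀ x y : NEWord (Fin m),
          (e (Quotient.mk (synSemiSetoid L) (neappend x y))).val
            = mcomp (e (Quotient.mk (synSemiSetoid L) x)).val
                    (e (Quotient.mk (synSemiSetoid L) y)).val := by
  classical
  set T := {f : Brandt n → Brandt n // AP n f} with hT
  have hfin : Finite T := Subtype.finite
  set m := Nat.card T with hm
  let E : Fin m ≃ T := (Finite.equivFin T).symm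
  set L : Set (List (Fin m)) :=
    {w | w ≠ [] ∧ muF (fun a => E a) (n := n) w ≠ xi none} with hL
  have memL : ∀ w : List (Fin m),
      w ∈ L ↔ w ≠ [] ∧ muF (fun a => E a) w ≠ xi none := fun _ => Iff.rfl
  have key : ∀ x y : NEWord (Fin m), (synSemiSetoid L).r x y →
      muF (fun a => E a) x.1 = muF (fun a => E a) y.1 := by
    intro x y h
    by_contra hne
    obtain ⟨u, v, hu, hv, hsep⟩ := separate _ _ hne
    set a := E.symm ⟨u, hu⟩ with ha
    set b := E.symm ⟨v, hv⟩ with hb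
    have hu' : muF (fun a => E a) [a] = u := by
      show (E a).val = u
      rw [ha, Equiv.apply_symm_apply]
    have hv' : muF (fun a => E a) [b] = v := by
      show (E b).val = v
      rw [hb, Equiv.apply_symm_apply]
    have hxw : ∀ w : List (Fin m),
        muF (fun a => E a) ([a] ++ w ++ [b])
          = mcomp u (mcomp (muF (fun a => E a) w) v) := by
      intro w
      rw [muF_append, muF_append, hu', hv']
      rfl
    have h' := h [a] [b] (by simp) (by simp)
    rw [memL, memL, hxw, hxw] at h'
    apply hsep
    have hne1 : ([a] ++ x.1 ++ [b] : List (Fin m)) ≠ [] := by simp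
    have hne2 : ([a] ++ y.1 ++ [b] : List (Fin m)) ≠ [] := by simp
    constructor
    · intro hp
      by_contra hq
      have := (h'.mpr ⟨hne2, hq⟩).2
      exact this hp
    · intro hq
      by_contra hp
      have := (h'.mp ⟨hne1, hp⟩).2
      exact this hq
  let F : NEWord (Fin m) → T := fun w => ⟨muF (fun a => E a) w.1, muF_ap _ w.1 w.2⟩
  let lift : Quotient (synSemiSetoid L) → T :=
    Quotient.lift F (fun x y hxy => Subtype.ext (key x y hxy))
  have hbij : Function.Bijective lift := by
    constructor
    · intro q1 q2
      refine Quotient.inductionOn₂ q1 q2 ?_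
      intro x y hF
      have hμ : muF (fun a => E a) x.1 = muF (fun a => E a) y.1 :=
        congrArg Subtype.val hF
      apply Quotient.sound
      intro u v huu hvv
      have hEq : muF (fun a => E a) (u ++ x.1 ++ v)
          = muF (fun a => E a) (u ++ y.1 ++ v) := by
        simp only [muF_append, hμ]
      rw [memL, memL, hEq]
      constructor
      · rintro ⟨-, h2⟩
        refine ⟨?_, h2⟩
        intro hh
        exact huu (List.append_eq_nil_iff.mp (List.append_eq_nil_iff.mp hh).1).1
      · rintro ⟨-, h2⟩
        refine ⟨?_, h2⟩
        intro hh
        exact huu (List.append_eq_nil_iff.mp (List.append_eq_nil_iff.mp hh).1).1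
    · intro f
      refine ⟨Quotient.mk _ ⟨[E.symm f], by simp⟩, ?_⟩
      show F ⟨[E.symm f], _⟩ = f
      apply Subtype.ext
      show (E (E.symm f)).val = f.val
      rw [Equiv.apply_symm_apply]
  refine ⟨m, L, fun h => h.1 rfl, Equiv.ofBijective lift hbij, ?_⟩
  intro x y
  show (F (neappend x y)).val = mcomp (F x).val (F y).val
  exact muF_append _ x.1 y.1
end
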